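/- arXiv:1701.07011 — 2 statements merged into one kernel-verified Lean document; each statement's English description precedes it below -/
import Mathlib

section
/- Let n ≥ 1, let x ∈ ℝⁿ be a nonzero vector, r ∈ ℝⁿ, and λ > 0. Define f : ℝ → ℝ by f(α) = (1/(2n))‖r − α·x‖₂² + λ|α|. Then a point α* ∈ ℝ is a minimizer of f with α* > 0 if and only if ⟨x, r⟩ > nλ (where ⟨·,·⟩ is the Euclidean inner product). -/
/-!
Expanding the square, the objective is `γ α² - β α + λ |α| + c` with `γ = ‖x‖²/(2n) > 0` and
`β = ⟨x, r⟩/n`. If `a > 0` is a minimizer, comparing with `α = 0` gives `β ≥ γ a + λ > λ`.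
Conversely, if `β > λ`, then `a = (β - λ)/(2γ) > 0` is a minimizer, since
`f α - f a = γ (α - a)² + λ (|α| - α) ≥ 0`.
-/

open Finset

namespace QuadraticAddAbs

variable {γ β lam c : ℝ}

theorem lt_of_isMinOn_of_pos (hγ : 0 < γ) {a : ℝ}
    (hmin : IsMinOn (fun α : ℝ => γ * α ^ 2 - β * α + lam * |α| + c) Set.univ a) (ha : 0 < a) :
    lam < β := by
  have h0 := isMinOn_iff.mp hmin 0 (Set.mem_univ 0)
  simp only [abs_zero, abs_of_pos ha] at h0
  nlinarith [mul_pos hγ (mul_pos ha ha)]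

theorem isMinOn_of_le (hγ : 0 < γ) (hlam : 0 ≤ lam) (hβ : lam ≤ β) :
    IsMinOn (fun α : ℝ => γ * α ^ 2 - β * α + lam * |α| + c) Set.univ
      ((β - lam) / (2 * γ)) := by
  set a := (β - lam) / (2 * γ) with ha
  have hβa : β = 2 * γ * a + lam := by rw [ha]; field_simp; ring
  have ha_nonneg : 0 ≤ a := div_nonneg (sub_nonneg.mpr hβ) (by positivity)
  refine isMinOn_iff.mpr fun α _ => sub_nonneg.mp ?_
  calc (0 : ℝ) ≤ γ * (α - a) ^ 2 + lam * (|α| - α) := by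
        have := le_abs_self α
        positivity
    _ = _ := by rw [abs_of_nonneg ha_nonneg, hβa]; ring

theorem exists_pos_isMinOn_iff (hγ : 0 < γ) (hlam : 0 ≤ lam) :
    (∃ a : ℝ, IsMinOn (fun α : ℝ => γ * α ^ 2 - β * α + lam * |α| + c) Set.univ a ∧ 0 < a) ↔
      lam < β :=
  ⟨fun ⟨_, hmin, ha⟩ => lt_of_isMinOn_of_pos hγ hmin ha, fun hβ =>
    ⟨_, isMinOn_of_le hγ hlam hβ.le, div_pos (sub_pos.mpr hβ) (by positivity)⟩⟩

end QuadraticAddAbs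

theorem sum_sub_mul_sq {ι : Type*} (s : Finset ι) (r x : ι → ℝ) (α : ℝ) :
    ∑ i ∈ s, (r i - α * x i) ^ 2
      = (∑ i ∈ s, x i ^ 2) * α ^ 2 - 2 * (∑ i ∈ s, x i * r i) * α + ∑ i ∈ s, r i ^ 2 := by
  simp only [sum_mul, mul_sum, ← sum_sub_distrib, ← sum_add_distrib]
  exact sum_congr rfl fun i _ => by ring

theorem sum_sq_pos_of_ne_zero {ι : Type*} [Fintype ι] {x : ι → ℝ} (hx : x ≠ 0) :
    0 < ∑ i, x i ^ 2 := by
  obtain ⟨j, hj⟩ := Function.ne_iff.mp hx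
  exact sum_pos' (fun i _ => sq_nonneg _) ⟨j, mem_univ j, pow_two_pos_of_ne_zero hj⟩

/-- For the one-variable lasso objective
`f(α) = (1/(2n)) ‖r − α·x‖₂² + λ|α|` with `x ≠ 0` and `λ > 0`,
there is a minimizer `α* > 0` if and only if `⟨x, r⟩ > nλ`. -/
theorem lasso_univariate_pos_minimizer (n : ℕ) (hn : 1 ≤ n) (x r : Fin n → ℝ)
    (hx : x ≠ 0) (lam : ℝ) (hlam : 0 < lam) :
    (∃ a : ℝ,
        IsMinOn (fun α : ℝ => (1 / (2 * (n : ℝ))) * ∑ i, (r i - α * x i) ^ 2 + lam * |α|)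
          Set.univ a ∧ 0 < a) ↔
      (n : ℝ) * lam < ∑ i, x i * r i := by
  have hn' : (0 : ℝ) < n := by exact_mod_cast hn
  have hobj : (fun α : ℝ => (1 / (2 * (n : ℝ))) * ∑ i, (r i - α * x i) ^ 2 + lam * |α|) =
      fun α => (∑ i, x i ^ 2) / (2 * n) * α ^ 2 - (∑ i, x i * r i) / n * α + lam * |α|
        + (∑ i, r i ^ 2) / (2 * n) := by
    funext α
    rw [sum_sub_mul_sq]
    field_simp
    ring
  have hγ : 0 < (∑ i, x i ^ 2) / (2 * n) := div_pos (sum_sq_pos_of_ne_zero hx) (by positivity)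
  rw [hobj, QuadraticAddAbs.exists_pos_isMinOn_iff hγ hlam.le, lt_div_iff₀ hn', mul_comm]
end

section
/- Let n ≥ 2 and let the random vector x = (x₁, …, x_n) have law equal to the n-fold product of the standard normal distribution N(0,1). Then for any two non-constant vectors y, y′ ∈ ℝⁿ, the random variables n σ_x² Cor²(x, y) and n σ_x² Cor²(x, y′) have the same law; that is, the distribution of n σ_x² Cor²(x, y) does not depend on y. -/
/-!
After centring, `n σ_x² Cor²(x, y) = ⟪u, x⟫²` where `u` is the centred vector `y - ȳ` normalised to
unit length. The standard Gaussian on `ℝⁿ` is rotation invariant, so `⟪u, x⟫ ∼ N(0, 1)` for every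
unit vector `u`; hence the statistic has the χ²₁ law `N(0, 1).map (· ^ 2)` whatever `y` is.
-/

open Finset MeasureTheory ProbabilityTheory

/-- Sample mean of a vector. -/
noncomputable def sampleMean {n : ℕ} (v : Fin n → ℝ) : ℝ := (∑ i, v i) / n

/-- Sample variance of a vector. -/
noncomputable def sampleVar {n : ℕ} (v : Fin n → ℝ) : ℝ :=
  (∑ i, (v i - sampleMean v) ^ 2) / n

/-- Pearson sample correlation of two vectors. -/
noncomputable def sampleCor {n : ℕ} (x y : Fin n → ℝ) : ℝ :=
  (∑ i, (x i - sampleMean x) * (y i - sampleMean y)) /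
    (n * Real.sqrt (sampleVar x) * Real.sqrt (sampleVar y))

section SampleStatistics

variable {n : ℕ}

lemma sum_sub_sampleMean_eq_zero (v : Fin n → ℝ) : ∑ i, (v i - sampleMean v) = 0 := by
  rcases n.eq_zero_or_pos with rfl | hn
  · simp
  · simp [sampleMean, Finset.sum_sub_distrib, mul_div_cancel₀ _ (by positivity : (n : ℝ) ≠ 0)]

lemma sum_sub_sampleMean_sq (v : Fin n → ℝ) :
    ∑ i, (v i - sampleMean v) ^ 2 = n * sampleVar v := by
  rcases n.eq_zero_or_pos with rfl | hn
  · simp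
  · rw [sampleVar, mul_div_cancel₀ _ (by positivity)]

lemma sampleVar_nonneg (v : Fin n → ℝ) : 0 ≤ sampleVar v := by
  unfold sampleVar
  positivity

lemma sampleVar_eq_zero_iff (v : Fin n → ℝ) : sampleVar v = 0 ↔ ∀ i, v i = sampleMean v := by
  rcases n.eq_zero_or_pos with rfl | hn
  · simp [sampleVar]
  · rw [sampleVar, div_eq_zero_iff, Finset.sum_eq_zero_iff_of_nonneg fun i _ => sq_nonneg _]
    simp [hn.ne', sub_eq_zero]

lemma sampleVar_pos {v : Fin n → ℝ} (hv : ∃ i j, v i ≠ v j) : 0 < sampleVar v := by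
  obtain ⟨i, j, hij⟩ := hv
  refine (sampleVar_nonneg v).lt_of_ne fun h => hij ?_
  have hconst := (sampleVar_eq_zero_iff v).1 h.symm
  rw [hconst i, hconst j]

lemma natCast_pos_of_sampleVar_pos {v : Fin n → ℝ} (hv : 0 < sampleVar v) : (0 : ℝ) < n := by
  rcases n.eq_zero_or_pos with rfl | hn
  · simp [sampleVar] at hv
  · exact_mod_cast hn

lemma sum_sub_sampleMean_mul (x w : Fin n → ℝ) (hw : ∑ i, w i = 0) :
    ∑ i, (x i - sampleMean x) * w i = ∑ i, x i * w i := by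
  simp [sub_mul, Finset.sum_sub_distrib, ← Finset.mul_sum, hw]

lemma sum_sub_sampleMean_div_sqrt_sq {y : Fin n → ℝ} (hy : 0 < sampleVar y) :
    ∑ i, ((y i - sampleMean y) / √(n * sampleVar y)) ^ 2 = 1 := by
  have hn := natCast_pos_of_sampleVar_pos hy
  simp_rw [div_pow, Real.sq_sqrt (by positivity : (0 : ℝ) ≤ n * sampleVar y)]
  rw [← Finset.sum_div, sum_sub_sampleMean_sq, div_self (by positivity)]

lemma natCast_mul_sampleVar_mul_sampleCor_sq (x y : Fin n → ℝ) (hy : 0 < sampleVar y) :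
    n * sampleVar x * sampleCor x y ^ 2 =
      (∑ i, (y i - sampleMean y) / √(n * sampleVar y) * x i) ^ 2 := by
  have hcov : ∑ i, (x i - sampleMean x) * (y i - sampleMean y) =
      ∑ i, x i * (y i - sampleMean y) :=
    sum_sub_sampleMean_mul x _ (sum_sub_sampleMean_eq_zero y)
  have hrhs : ∑ i, (y i - sampleMean y) / √(n * sampleVar y) * x i =
      (∑ i, x i * (y i - sampleMean y)) / √(n * sampleVar y) := by
    rw [Finset.sum_div]
    exact Finset.sum_congr rfl fun i _ => by ring
  have hn := natCast_pos_of_sampleVar_pos hy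
  rw [hrhs, ← hcov]
  by_cases hx : sampleVar x = 0
  -- For constant `x`, `sampleCor x y` is the junk value `0 / 0 = 0`, and the covariance vanishes.
  · simp [hx, (sampleVar_eq_zero_iff x).1 hx]
  · have hx' : 0 < sampleVar x := (sampleVar_nonneg x).lt_of_ne' hx
    rw [sampleCor, div_pow, div_pow, mul_pow, mul_pow, Real.sq_sqrt hx'.le, Real.sq_sqrt hy.le,
      Real.sq_sqrt (by positivity)]
    field_simp

end SampleStatistics

lemma stdGaussian_map_innerSL {E : Type*} [NormedAddCommGroup E] [InnerProductSpace ℝ E]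
    [FiniteDimensional ℝ E] [MeasurableSpace E] [BorelSpace E] (u : E) :
    (stdGaussian E).map (innerSL ℝ u) = gaussianReal 0 (‖u‖₊ ^ 2) := by
  rw [IsGaussian.map_eq_gaussianReal, integral_strongDual_stdGaussian,
    variance_dual_stdGaussian, innerSL_apply_norm]
  congr
  ext
  simp

lemma pi_gaussianReal_map_sum_mul {ι : Type*} [Fintype ι] (u : ι → ℝ) :
    (Measure.pi fun _ : ι => gaussianReal 0 1).map (fun x => ∑ i, u i * x i) =
      gaussianReal 0 (∑ i, u i ^ 2).toNNReal := by
  have h : (fun x : ι → ℝ => ∑ i, u i * x i) =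
      innerSL ℝ (WithLp.toLp 2 u) ∘ WithLp.toLp 2 := by
    ext x
    simp [PiLp.inner_apply, mul_comm]
  rw [h, ← Measure.map_map (by fun_prop) (by fun_prop), map_pi_eq_stdGaussian,
    stdGaussian_map_innerSL]
  congr
  ext
  simp [EuclideanSpace.real_norm_sq_eq, Finset.sum_nonneg, sq_nonneg]

lemma map_nVarCorSq_pi_gaussianReal {n : ℕ} {y : Fin n → ℝ} (hy : ∃ i j, y i ≠ y j) :
    Measure.map (fun x : Fin n → ℝ => (n : ℝ) * sampleVar x * sampleCor x y ^ 2)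
        (Measure.pi fun _ : Fin n => gaussianReal 0 1) =
      (gaussianReal 0 1).map (· ^ 2) := by
  have hv := sampleVar_pos hy
  simp_rw [natCast_mul_sampleVar_mul_sampleCor_sq _ _ hv]
  have hlaw := pi_gaussianReal_map_sum_mul fun i => (y i - sampleMean y) / √(n * sampleVar y)
  rw [sum_sub_sampleMean_div_sqrt_sq hv, Real.toNNReal_one] at hlaw
  rw [← Function.comp_def (· ^ 2), ← Measure.map_map (by fun_prop) (by fun_prop), hlaw]

theorem nVarCorSq_law_indep_of_y_general (n : ℕ) (y y' : Fin n → ℝ)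
    (hy : ∃ i j, y i ≠ y j) (hy' : ∃ i j, y' i ≠ y' j) :
    Measure.map (fun x : Fin n → ℝ => (n : ℝ) * sampleVar x * sampleCor x y ^ 2)
        (Measure.pi fun _ : Fin n => gaussianReal 0 1) =
      Measure.map (fun x : Fin n → ℝ => (n : ℝ) * sampleVar x * sampleCor x y' ^ 2)
        (Measure.pi fun _ : Fin n => gaussianReal 0 1) := by
  rw [map_nVarCorSq_pi_gaussianReal hy, map_nVarCorSq_pi_gaussianReal hy']

/-- Rotational invariance: when the coordinates of `x` are i.i.d. standard normal,
the law of `n σ_x² Cor²(x, y)` does not depend on the non-constant vector `y`. -/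
theorem nVarCorSq_law_indep_of_y (n : ℕ) (hn : 2 ≤ n) (y y' : Fin n → ℝ)
    (hy : ∃ i j, y i ≠ y j) (hy' : ∃ i j, y' i ≠ y' j) :
    Measure.map (fun x : Fin n → ℝ => (n : ℝ) * sampleVar x * sampleCor x y ^ 2)
        (Measure.pi fun _ : Fin n => gaussianReal 0 1) =
      Measure.map (fun x : Fin n → ℝ => (n : ℝ) * sampleVar x * sampleCor x y' ^ 2)
        (Measure.pi fun _ : Fin n => gaussianReal 0 1) :=
  nVarCorSq_law_indep_of_y_general n y y' hy hy'
end
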